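/- Let F₁, F₂ ∈ ℝ^{p×q} be matrices and g₁, g₂ ∈ ℝ^p vectors, and define ν_i = (F_i F_i⁺ − I)·g_i for i = 1, 2. Then ‖ν₁ − ν₂‖₂ ≤ ‖g₁ − g₂‖₂ + ‖F₁ − F₂‖₂·(‖F₁⁺‖₂ + ‖F₂⁺‖₂)·‖g₂‖₂. -/

import Mathlib

/-!
Write `Pᵢ = Fᵢ Fᵢ⁺`, an orthogonal projection, so that
`ν₁ - ν₂ = (P₁ - 1)(g₁ - g₂) + (P₁ - P₂) g₂` and `‖P₁ - 1‖ ≤ 1`. The difference of the projections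
splits as `P₁ - P₂ = P₁ (1 - P₂) - (1 - P₁) P₂`. Since `(1 - P₁) F₁ = 0`, the second term equals
`(1 - P₁)(F₂ - F₁) F₂⁺`, of norm at most `‖F₁ - F₂‖ ‖F₂⁺‖`; the first is the adjoint of
`(1 - P₂) P₁` and is bounded in the same way by `‖F₁ - F₂‖ ‖F₁⁺‖`.
-/

open Matrix
open scoped Matrix.Norms.L2Operator

/-- `Xp` is the Moore–Penrose pseudoinverse of `X`: the four Penrose conditions. -/
def IsMoorePenrose {α β : Type*} [Fintype α] [Fintype β] [DecidableEq α] [DecidableEq β]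
    (X : Matrix α β ℝ) (Xp : Matrix β α ℝ) : Prop :=
  X * Xp * X = X ∧ Xp * X * Xp = Xp ∧ (X * Xp)ᵀ = X * Xp ∧ (Xp * X)ᵀ = Xp * X

/-- The Euclidean norm of a finitely-indexed real vector. -/
noncomputable def evnorm {ι : Type*} [Fintype ι] (v : ι → ℝ) : ℝ :=
  Real.sqrt (∑ i, v i ^ 2)

namespace Matrix

variable {𝕜 m n : Type*} [RCLike 𝕜] [Fintype m] [Fintype n]

lemma isStarProjection_mul_of_mul_mul_eq_self {F : Matrix m n 𝕜} {X : Matrix n m 𝕜}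
    (hFXF : F * X * F = F) (hFX : (F * X)ᴴ = F * X) : IsStarProjection (F * X) where
  isIdempotentElem := by rw [IsIdempotentElem, ← Matrix.mul_assoc, hFXF]
  isSelfAdjoint := hFX

variable [DecidableEq m]

lemma l2_opNorm_one_sub_mul_le_one {F : Matrix m n 𝕜} {X : Matrix n m 𝕜}
    (hFXF : F * X * F = F) (hFX : (F * X)ᴴ = F * X) : ‖1 - F * X‖ ≤ 1 :=
  (isStarProjection_mul_of_mul_mul_eq_self hFXF hFX).one_sub.norm_le

variable [DecidableEq n]

lemma l2_opNorm_one_sub_mul_mul_le {F₁ F₂ : Matrix m n 𝕜} {X₁ X₂ : Matrix n m 𝕜}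
    (hFXF₁ : F₁ * X₁ * F₁ = F₁) (hFX₁ : (F₁ * X₁)ᴴ = F₁ * X₁) :
    ‖(1 - F₁ * X₁) * (F₂ * X₂)‖ ≤ ‖F₁ - F₂‖ * ‖X₂‖ := by
  have hF₁ : (1 - F₁ * X₁) * F₁ = 0 := by rw [Matrix.sub_mul, Matrix.one_mul, hFXF₁, sub_self]
  have hfactor : (1 - F₁ * X₁) * (F₂ * X₂) = (1 - F₁ * X₁) * ((F₂ - F₁) * X₂) := by
    rw [Matrix.sub_mul F₂ F₁, Matrix.mul_sub, ← Matrix.mul_assoc _ F₁, hF₁, Matrix.zero_mul,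
      sub_zero]
  calc ‖(1 - F₁ * X₁) * (F₂ * X₂)‖ ≤ ‖1 - F₁ * X₁‖ * (‖F₂ - F₁‖ * ‖X₂‖) := by
        rw [hfactor]
        exact (l2_opNorm_mul _ _).trans
          (mul_le_mul_of_nonneg_left (l2_opNorm_mul _ _) (norm_nonneg _))
    _ ≤ 1 * (‖F₂ - F₁‖ * ‖X₂‖) := by
        gcongr
        exact l2_opNorm_one_sub_mul_le_one hFXF₁ hFX₁
    _ = ‖F₁ - F₂‖ * ‖X₂‖ := by rw [one_mul, norm_sub_rev]

lemma l2_opNorm_mul_sub_mul_le {F₁ F₂ : Matrix m n 𝕜} {X₁ X₂ : Matrix n m 𝕜}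
    (hFXF₁ : F₁ * X₁ * F₁ = F₁) (hFX₁ : (F₁ * X₁)ᴴ = F₁ * X₁)
    (hFXF₂ : F₂ * X₂ * F₂ = F₂) (hFX₂ : (F₂ * X₂)ᴴ = F₂ * X₂) :
    ‖F₁ * X₁ - F₂ * X₂‖ ≤ ‖F₁ - F₂‖ * (‖X₁‖ + ‖X₂‖) := by
  have hsplit : F₁ * X₁ - F₂ * X₂ =
      ((1 - F₂ * X₂) * (F₁ * X₁))ᴴ - (1 - F₁ * X₁) * (F₂ * X₂) := by
    rw [conjTranspose_mul, conjTranspose_sub, conjTranspose_one, hFX₁, hFX₂]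
    noncomm_ring
  calc ‖F₁ * X₁ - F₂ * X₂‖
      ≤ ‖(1 - F₂ * X₂) * (F₁ * X₁)‖ + ‖(1 - F₁ * X₁) * (F₂ * X₂)‖ := by
        rw [hsplit, ← l2_opNorm_conjTranspose ((1 - F₂ * X₂) * (F₁ * X₁))]
        exact norm_sub_le _ _
    _ ≤ ‖F₂ - F₁‖ * ‖X₁‖ + ‖F₁ - F₂‖ * ‖X₂‖ :=
        add_le_add (l2_opNorm_one_sub_mul_mul_le hFXF₂ hFX₂)
          (l2_opNorm_one_sub_mul_mul_le hFXF₁ hFX₁)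
    _ = ‖F₁ - F₂‖ * (‖X₁‖ + ‖X₂‖) := by rw [norm_sub_rev]; ring

end Matrix

section evnorm

variable {m n : Type*} [Fintype m] [Fintype n]

lemma evnorm_eq_norm_toLp (v : n → ℝ) : evnorm v = ‖WithLp.toLp 2 v‖ := by
  simp [evnorm, EuclideanSpace.norm_eq, sq_abs]

lemma evnorm_add_le (v w : n → ℝ) : evnorm (v + w) ≤ evnorm v + evnorm w := by
  simp only [evnorm_eq_norm_toLp, WithLp.toLp_add]
  exact norm_add_le _ _

lemma evnorm_mulVec_le [DecidableEq m] [DecidableEq n] (A : Matrix m n ℝ) (v : n → ℝ) :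
    evnorm (A *ᵥ v) ≤ ‖A‖ * evnorm v := by
  rw [evnorm_eq_norm_toLp, evnorm_eq_norm_toLp]
  exact l2_opNorm_mulVec A (WithLp.toLp 2 v)

end evnorm

/-- Let `F₁, F₂ ∈ ℝ^{p×q}`, `g₁, g₂ ∈ ℝ^p`, and `ν_i = (F_i F_i⁺ − I) g_i`.  Then
`‖ν₁ − ν₂‖₂ ≤ ‖g₁ − g₂‖₂ + ‖F₁ − F₂‖₂ (‖F₁⁺‖₂ + ‖F₂⁺‖₂) ‖g₂‖₂`. -/
theorem nu_diff_norm_bound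
    {p q : ℕ} (F₁ F₂ : Matrix (Fin p) (Fin q) ℝ) (Fp₁ Fp₂ : Matrix (Fin q) (Fin p) ℝ)
    (h₁ : IsMoorePenrose F₁ Fp₁) (h₂ : IsMoorePenrose F₂ Fp₂)
    (g₁ g₂ : Fin p → ℝ) :
    evnorm ((F₁ * Fp₁ - 1).mulVec g₁ - (F₂ * Fp₂ - 1).mulVec g₂) ≤
      evnorm (g₁ - g₂) + ‖F₁ - F₂‖ * (‖Fp₁‖ + ‖Fp₂‖) * evnorm g₂ := by
  obtain ⟨hFXF₁, -, hFX₁, -⟩ := h₁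
  obtain ⟨hFXF₂, -, hFX₂, -⟩ := h₂
  rw [← conjTranspose_eq_transpose_of_trivial] at hFX₁ hFX₂
  have hproj : ‖F₁ * Fp₁ - 1‖ ≤ 1 := by
    rw [norm_sub_rev]
    exact l2_opNorm_one_sub_mul_le_one hFXF₁ hFX₁
  have hsplit : (F₁ * Fp₁ - 1) *ᵥ g₁ - (F₂ * Fp₂ - 1) *ᵥ g₂ =
      (F₁ * Fp₁ - 1) *ᵥ (g₁ - g₂) + (F₁ * Fp₁ - F₂ * Fp₂) *ᵥ g₂ := by
    simp only [mulVec_sub, sub_mulVec]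
    abel
  calc evnorm ((F₁ * Fp₁ - 1) *ᵥ g₁ - (F₂ * Fp₂ - 1) *ᵥ g₂)
      ≤ ‖F₁ * Fp₁ - 1‖ * evnorm (g₁ - g₂) + ‖F₁ * Fp₁ - F₂ * Fp₂‖ * evnorm g₂ := by
        rw [hsplit]
        exact (evnorm_add_le _ _).trans (add_le_add (evnorm_mulVec_le _ _) (evnorm_mulVec_le _ _))
    _ ≤ 1 * evnorm (g₁ - g₂) + ‖F₁ - F₂‖ * (‖Fp₁‖ + ‖Fp₂‖) * evnorm g₂ :=
        add_le_add (mul_le_mul_of_nonneg_right hproj (Real.sqrt_nonneg _))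
          (mul_le_mul_of_nonneg_right (l2_opNorm_mul_sub_mul_le hFXF₁ hFX₁ hFXF₂ hFX₂)
            (Real.sqrt_nonneg _))
    _ = evnorm (g₁ - g₂) + ‖F₁ - F₂‖ * (‖Fp₁‖ + ‖Fp₂‖) * evnorm g₂ := by rw [one_mul]
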